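/- arXiv:1109.4019 — 2 statements merged into one kernel-verified Lean document; each statement's English description precedes it below -/
import Mathlib

section
/- Let Λ and Γ be finite dimensional Frobenius k-algebras with Nakayama automorphisms ν_Λ and ν_Γ respectively. Then Λ ⊗_k Γ is a Frobenius k-algebra, and ν_Λ ⊗ ν_Γ is a Nakayama automorphism for Λ ⊗_k Γ. -/
open scoped TensorProduct

open Module

/-! The isomorphism is `φ_Λ ⊗ φ_Γ` followed by `D(Λ) ⊗ D(Γ) ≅ D(Λ ⊗ Γ)`. A map `φ : A → D(A)`
is left `A`-linear exactly when `φ(l)(z) = φ(1)(z l)`, so everything is a statement about the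
form `φ(1) = φ_Λ(1) ⊗ φ_Γ(1)`. Both required identities are bilinear, and on pure tensors the
form factors, so they reduce to the identities for `Λ` and `Γ` separately. -/

theorem dual_mul_apply_iff {R A : Type*} [CommRing R] [Ring A] [Algebra R A]
    (φ : A →ₗ[R] Dual R A) :
    (∀ l x z : A, φ (l * x) z = φ x (z * l)) ↔ ∀ l z : A, φ l z = φ 1 (z * l) := by
  refine ⟨fun h l z => by simpa using h l 1 z, fun h l x z => ?_⟩
  rw [h, h x, mul_assoc]

theorem TensorProduct.forall₂_of_tmul {R M N P Q S : Type*} [CommRing R]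
    [AddCommGroup M] [AddCommGroup N] [AddCommGroup P] [AddCommGroup Q] [AddCommGroup S]
    [Module R M] [Module R N] [Module R P] [Module R Q] [Module R S]
    {f g : M ⊗[R] N →ₗ[R] P ⊗[R] Q →ₗ[R] S}
    (h : ∀ m n p q, f (m ⊗ₜ n) (p ⊗ₜ q) = g (m ⊗ₜ n) (p ⊗ₜ q)) (x : M ⊗[R] N)
    (y : P ⊗[R] Q) : f x y = g x y := by
  congr 2
  exact TensorProduct.ext' fun m n => TensorProduct.ext' (h m n)

section Tensor

variable {R A B : Type*} [CommRing R] [Ring A] [Ring B] [Algebra R A] [Algebra R B]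
  [Module.Free R A] [Module.Finite R A] [Module.Free R B] [Module.Finite R B]

noncomputable def dualTensorEquiv (φA : A ≃ₗ[R] Dual R A) (φB : B ≃ₗ[R] Dual R B) :
    A ⊗[R] B ≃ₗ[R] Dual R (A ⊗[R] B) :=
  (TensorProduct.congr φA φB).trans (TensorProduct.dualDistribEquiv R A B)

variable (φA : A ≃ₗ[R] Dual R A) (φB : B ≃ₗ[R] Dual R B)

@[simp]
theorem dualTensorEquiv_tmul_apply_tmul (a m : A) (b n : B) :
    dualTensorEquiv φA φB (a ⊗ₜ b) (m ⊗ₜ n) = φA a m * φB b n := by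
  simp [dualTensorEquiv, TensorProduct.dualDistribEquivOfBasis]

theorem dualTensorEquiv_one_apply_tmul (m : A) (n : B) :
    dualTensorEquiv φA φB 1 (m ⊗ₜ n) = φA 1 m * φB 1 n := by
  rw [Algebra.TensorProduct.one_def, dualTensorEquiv_tmul_apply_tmul]

theorem dualTensorEquiv_apply_eq_one_apply_mul
    (hφA : ∀ l z : A, φA l z = φA 1 (z * l)) (hφB : ∀ l z : B, φB l z = φB 1 (z * l))
    (l z : A ⊗[R] B) : dualTensorEquiv φA φB l z = dualTensorEquiv φA φB 1 (z * l) :=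
  TensorProduct.forall₂_of_tmul (f := (dualTensorEquiv φA φB).toLinearMap)
    (g := (LinearMap.mul R _).flip.compr₂ (dualTensorEquiv φA φB 1))
    (fun a b m n => by
      simp [dualTensorEquiv_one_apply_tmul, hφA a, hφB b]) l z

theorem dualTensorEquiv_one_apply_mul_congr (νA : A ≃ₐ[R] A) (νB : B ≃ₐ[R] B)
    (hνA : ∀ l x : A, φA 1 (l * x) = φA 1 (νA x * l))
    (hνB : ∀ l x : B, φB 1 (l * x) = φB 1 (νB x * l)) (l x : A ⊗[R] B) :
    dualTensorEquiv φA φB 1 (l * x) =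
      dualTensorEquiv φA φB 1 (Algebra.TensorProduct.congr νA νB x * l) :=
  TensorProduct.forall₂_of_tmul (f := (LinearMap.mul R _).compr₂ (dualTensorEquiv φA φB 1))
    (g := ((LinearMap.mul R _).flip.compl₂ (Algebra.TensorProduct.congr νA νB).toLinearMap).compr₂
      (dualTensorEquiv φA φB 1))
    (fun a b m n => by
      simp [dualTensorEquiv_one_apply_tmul, hνA a, hνB b]) l x

end Tensor

/-- if `Λ` and `Γ` are finite dimensional Frobenius `k`-algebras with Nakayama
automorphisms `ν_Λ` and `ν_Γ` (associated to left-module isomorphisms `φ_Λ : Λ ≅ D(Λ)`,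
`φ_Γ : Γ ≅ D(Γ)`), then `Λ ⊗[k] Γ` is Frobenius with `ν_Λ ⊗ ν_Γ` as a Nakayama
automorphism.  Here an isomorphism `φ : A ≅ D(A)` of left `A`-modules is encoded by the
condition `φ(l·x) z = φ(x)(z·l)`, and the Nakayama property by `φ(1)(l·x) = φ(1)(ν(x)·l)`. -/
theorem stmt_9 (k : Type*) [Field k] (Λ Γ : Type*) [Ring Λ] [Ring Γ]
    [Algebra k Λ] [Algebra k Γ] [Module.Finite k Λ] [Module.Finite k Γ]
    (φΛ : Λ ≃ₗ[k] Module.Dual k Λ)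
    (hφΛ : ∀ l x z : Λ, φΛ (l * x) z = φΛ x (z * l))
    (νΛ : Λ ≃ₐ[k] Λ)
    (hνΛ : ∀ l x : Λ, φΛ 1 (l * x) = φΛ 1 (νΛ x * l))
    (φΓ : Γ ≃ₗ[k] Module.Dual k Γ)
    (hφΓ : ∀ l x z : Γ, φΓ (l * x) z = φΓ x (z * l))
    (νΓ : Γ ≃ₐ[k] Γ)
    (hνΓ : ∀ l x : Γ, φΓ 1 (l * x) = φΓ 1 (νΓ x * l)) :
    ∃ φ : (Λ ⊗[k] Γ) ≃ₗ[k] Module.Dual k (Λ ⊗[k] Γ),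
      (∀ l x z : Λ ⊗[k] Γ, φ (l * x) z = φ x (z * l)) ∧
      (∀ l x : Λ ⊗[k] Γ,
        φ 1 (l * x) = φ 1 ((Algebra.TensorProduct.congr νΛ νΓ) x * l)) := by
  refine ⟨dualTensorEquiv φΛ φΓ, (dual_mul_apply_iff (dualTensorEquiv φΛ φΓ).toLinearMap).2 ?_,
    dualTensorEquiv_one_apply_mul_congr φΛ φΓ νΛ νΓ hνΛ hνΓ⟩
  exact dualTensorEquiv_apply_eq_one_apply_mul φΛ φΓ
    ((dual_mul_apply_iff φΛ.toLinearMap).1 hφΛ) ((dual_mul_apply_iff φΓ.toLinearMap).1 hφΓ)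
end

section
/- Let k be a field of characteristic p ≠ 2 and let A = k⟨X₁,…,X_c⟩/(X_i², X_iX_j + X_jX_i) be the exterior algebra on c generators. Define d : A^c → A on the basis by d(x_c^{u_c}⋯x_1^{u_1} e_w) = ((−1)^{u_{w+1}+⋯+u_c} − (−1)^{u_1+⋯+u_{w−1}}) x_c^{u_c}⋯x_w^{u_w+1}⋯x_1^{u_1} (with exponents u_i ∈ {0,1}). Then a monomial x_c^{u_c}⋯x_1^{u_1} lies in the image of d if and only if u_1 + ⋯ + u_c is a positive even number; consequently dim_k(Im d) = 2^{c−1} − 1. -/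
/-!
For a monomial `m` of degree `n`, the two signs in the formula for `d (m e_w)` are those of
`x_w * m` and `m * x_w`, so `d (m e_w) = x_w m - m x_w = (1 - (-1)^n) x_w m`. Hence `d` kills the
`e_w`-multiples of even monomials and sends those of odd monomials to `±2` times a monomial of
even degree, and every monomial of positive even degree arises this way. As the monomials
form a basis of `A`, the image of `d` is spanned by the `2^(c-1) - 1` monomials of positive even
degree.
-/

open scoped Finset

/-- The `i`th generator `x_i` of the exterior algebra on `Fin c → k`. -/
noncomputable def extGen (k : Type*) [Field k] (c : ℕ) (i : Fin c) :
    ExteriorAlgebra k (Fin c → k) :=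
  ExteriorAlgebra.ι k (Pi.single i 1)

/-- The monomial `x_c^{u_c} ⋯ x_1^{u_1}` (product taken in decreasing order of the index). -/
noncomputable def extMono (k : Type*) [Field k] (c : ℕ) (u : Fin c → ℕ) :
    ExteriorAlgebra k (Fin c → k) :=
  (((List.finRange c).reverse).map (fun i => extGen k c i ^ u i)).prod

open Finset

theorem neg_one_pow_eq_neg_one_pow_iff_even {R : Type*} [Ring R] (h : (-1 : R) ≠ 1) (a b : ℕ) :
    (-1 : R) ^ a = (-1) ^ b ↔ Even (a + b) := by
  rcases Nat.even_or_odd a with ha | ha <;> rcases Nat.even_or_odd b with hb | hb <;>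
    simp only [ha.neg_one_pow, hb.neg_one_pow] <;> grind

theorem Finset.card_filter_even_card {α : Type*} [Fintype α] [Nonempty α] :
    #{t : Finset α | Even #t} = 2 ^ (Fintype.card α - 1) := by
  have hsum : ∑ t : Finset α, (-1 : ℤ) ^ #t = 0 := by
    rw [← powerset_univ]; exact sum_powerset_neg_one_pow_card_of_nonempty univ_nonempty
  have hsplit : ∑ t : Finset α, (-1 : ℤ) ^ #t =
      #{t : Finset α | Even #t} - #{t : Finset α | ¬Even #t} := by
    rw [← sum_filter_add_sum_filter_not univ (fun t : Finset α => Even #t),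
      sum_congr rfl fun t ht => (mem_filter.1 ht).2.neg_one_pow,
      sum_congr rfl fun t ht => (Nat.not_even_iff_odd.1 (mem_filter.1 ht).2).neg_one_pow]
    simp [sub_eq_add_neg]
  have htotal := card_filter_add_card_filter_not (s := (univ : Finset (Finset α)))
    fun t => Even #t
  obtain ⟨n, hn⟩ : ∃ n, Fintype.card α = n + 1 :=
    Nat.exists_eq_succ_of_ne_zero Fintype.card_ne_zero
  rw [card_univ, Fintype.card_finset, hn, pow_succ] at htotal
  rw [hn, Nat.add_sub_cancel]
  omega

theorem Finset.card_filter_even_card_pos {α : Type*} [Fintype α] [DecidableEq α] :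
    #{t : Finset α | Even #t ∧ 0 < #t} = 2 ^ (Fintype.card α - 1) - 1 := by
  cases isEmpty_or_nonempty α
  · simp [Subsingleton.elim _ (∅ : Finset α)]
  · have herase : ({t : Finset α | Even #t ∧ 0 < #t} : Finset (Finset α)) =
        ({t : Finset α | Even #t} : Finset (Finset α)).erase ∅ := by
      ext t; simp [card_pos, nonempty_iff_ne_empty, and_comm]
    rw [herase, card_erase_of_mem (by simp), card_filter_even_card]

theorem Finset.sum_eq_card_filter_eq_one {ι : Type*} (s : Finset ι) {u : ι → ℕ}
    (hu : ∀ i ∈ s, u i ≤ 1) : ∑ i ∈ s, u i = #{i ∈ s | u i = 1} := by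
  rw [card_filter]
  refine sum_congr rfl fun i hi => ?_
  rcases Nat.le_one_iff_eq_zero_or_eq_one.1 (hu i hi) with h | h <;> simp [h]

theorem List.prod_map_pow_eq_prod_map_filter {ι M : Type*} [Monoid M] (f : ι → M) (u : ι → ℕ)
    (l : List ι) (hu : ∀ i ∈ l, u i ≤ 1) :
    (l.map fun i => f i ^ u i).prod = ((l.filter fun i => u i = 1).map f).prod := by
  induction l with
  | nil => rfl
  | cons a l ih =>
    rw [List.forall_mem_cons] at hu
    rcases Nat.le_one_iff_eq_zero_or_eq_one.1 hu.1 with ha | ha <;> simp [ha, ih hu.2]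

theorem Module.Basis.finrank_span_image {ι K V : Type*} [DivisionRing K] [AddCommGroup V]
    [Module K V] (b : Module.Basis ι K V) (s : Finset ι) :
    Module.finrank K (Submodule.span K (b '' s)) = #s := by
  rw [Set.image_eq_range]
  exact (finrank_span_eq_card (b.linearIndependent.comp _ Subtype.val_injective)).trans (by simp)

section Monomials

variable (k : Type*) [Field k] (c : ℕ)

noncomputable def extMonoOf (s : Finset (Fin c)) : ExteriorAlgebra k (Fin c → k) :=
  ((s.sort (· ≥ ·)).map (extGen k c)).prod

variable {k c}

theorem extMono_eq_extMonoOf {u : Fin c → ℕ} (hu : ∀ i, u i ≤ 1) :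
    extMono k c u = extMonoOf k c {i | u i = 1} := by
  have hsorted : ((List.finRange c).reverse.filter fun i => u i = 1).Pairwise (· ≥ ·) :=
    ((List.pairwise_reverse.2 (List.pairwise_le_finRange c)).filter _)
  have hnodup : ((List.finRange c).reverse.filter fun i => u i = 1).Nodup :=
    (List.nodup_reverse.2 (List.nodup_finRange c)).filter _
  have hset : ((List.finRange c).reverse.filter fun i => u i = 1).toFinset =
      ({i | u i = 1} : Finset (Fin c)) := by
    ext i; simp
  rw [extMono, List.prod_map_pow_eq_prod_map_filter _ _ _ fun i _ => hu i, extMonoOf, ← hset,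
    (List.toFinset_sort _ hnodup).2 hsorted]

theorem extMono_eq_zero_of_two_le {u : Fin c → ℕ} {i : Fin c} (h : 2 ≤ u i) :
    extMono k c u = 0 := by
  refine List.prod_eq_zero (List.mem_map.2 ⟨i, by simp, ?_⟩)
  rw [← Nat.add_sub_cancel' h, pow_add, sq, extGen, ExteriorAlgebra.ι_sq_zero, zero_mul]

theorem extMonoOf_insert {s : Finset (Fin c)} {a : Fin c} (h : ∀ j ∈ s, j < a) :
    extMonoOf k c (insert a s) = extGen k c a * extMonoOf k c s := by
  rw [extMonoOf, sort_insert _ (fun j hj => (h j hj).le) fun ha => lt_irrefl a (h a ha)]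
  rfl

theorem basis_exteriorAlgebra_singleton (a : Fin c) :
    (Pi.basisFun k (Fin c)).ExteriorAlgebra {a} = extGen k c a := by
  rw [ExteriorAlgebra.basis_apply_ofCard _ (card_singleton a)]
  simp [ExteriorAlgebra.ιMulti_family, ExteriorAlgebra.ιMulti_apply,
    Set.powersetCard.ofFinEmbEquiv_symm_apply, extGen]

/-- Mathlib's basis vectors multiply the generators in increasing order, ours in decreasing order,
hence the sign. -/
theorem exists_extMonoOf_eq_units_smul_basis (s : Finset (Fin c)) :
    ∃ ε : ℤˣ, extMonoOf k c s = ε • (Pi.basisFun k (Fin c)).ExteriorAlgebra s := by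
  induction s using Finset.induction_on_max with
  | empty => exact ⟨1, by simp [extMonoOf, ExteriorAlgebra.basis_apply]⟩
  | insert a s h ih =>
    obtain ⟨ε, hε⟩ := ih
    have hdisj : Disjoint {a} s := disjoint_singleton_left.2 fun ha => lt_irrefl a (h a ha)
    obtain ⟨σ, hσ⟩ : ∃ σ : ℤˣ, (Pi.basisFun k (Fin c)).ExteriorAlgebra {a} *
        (Pi.basisFun k (Fin c)).ExteriorAlgebra s = σ •
            (Pi.basisFun k (Fin c)).ExteriorAlgebra (({a} : Finset (Fin c)).disjUnion s hdisj) :=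
      ⟨_, ExteriorAlgebra.basis_mul_of_disjoint _
        (Set.powersetCard.ofCard (card_singleton a)) (Set.powersetCard.ofCard rfl) hdisj⟩
    rw [disjUnion_eq_union, ← insert_eq] at hσ
    refine ⟨ε * σ, ?_⟩
    rw [extMonoOf_insert h, hε, mul_smul_comm, ← basis_exteriorAlgebra_singleton, hσ, mul_smul]

variable (k c)

noncomputable def extMonoBasis :
    Module.Basis (Finset (Fin c)) k (ExteriorAlgebra k (Fin c → k)) :=
  (Pi.basisFun k (Fin c)).ExteriorAlgebra.unitsSMul fun s =>
    Units.map (Int.castRingHom k : ℤ →* k)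
      (exists_extMonoOf_eq_units_smul_basis (k := k) s).choose

variable {k c}

@[simp]
theorem coe_extMonoBasis : ⇑(extMonoBasis k c) = extMonoOf k c := by
  ext1 s
  refine ((exists_extMonoOf_eq_units_smul_basis s).choose_spec.trans ?_).symm
  rw [extMonoBasis, Module.Basis.unitsSMul_apply, Units.smul_def, Units.smul_def, Units.coe_map,
    ← Int.cast_smul_eq_zsmul k]
  rfl

end Monomials

section Commutator

variable {k : Type*} [Field k] {c : ℕ}

/-- The two signs are those of `x_w * m` and `m * x_w` for the monomial `m`, so this says
`d (m e_w) = x_w m - m x_w` on monomials. -/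
def IsGeneratorCommutator
    (d : (Fin c → ExteriorAlgebra k (Fin c → k)) →ₗ[k] ExteriorAlgebra k (Fin c → k)) : Prop :=
  ∀ (u : Fin c → ℕ), (∀ i, u i ≤ 1) → ∀ w : Fin c,
    d (Pi.single w (extMono k c u)) =
      ((-1 : k) ^ (∑ i ∈ Finset.univ.filter (fun i => w < i), u i) -
       (-1 : k) ^ (∑ i ∈ Finset.univ.filter (fun i => i < w), u i)) •
        extMono k c (Function.update u w (u w + 1))

variable (k) in
def commutatorCoeff (s : Finset (Fin c)) (w : Fin c) : k :=
  (-1) ^ #{i ∈ s | w < i} - (-1) ^ #{i ∈ s | i < w}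

theorem commutatorCoeff_eq_zero_iff (h : (-1 : k) ≠ 1) {s : Finset (Fin c)} {w : Fin c}
    (hw : w ∉ s) : commutatorCoeff k s w = 0 ↔ Even #s := by
  have hsplit : {i ∈ s | i < w} = {i ∈ s | ¬w < i} :=
    filter_congr fun i hi => by
      rw [not_lt, lt_iff_le_and_ne, and_iff_left (ne_of_mem_of_not_mem hi hw)]
  rw [commutatorCoeff, sub_eq_zero, neg_one_pow_eq_neg_one_pow_iff_even h, hsplit,
    card_filter_add_card_filter_not]

theorem extMono_indicator (s : Finset (Fin c)) :
    extMono k c (fun i => if i ∈ s then 1 else 0) = extMonoOf k c s := by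
  rw [extMono_eq_extMonoOf fun i => by split_ifs <;> simp]
  congr 1
  ext i
  simp

variable {d : (Fin c → ExteriorAlgebra k (Fin c → k)) →ₗ[k] ExteriorAlgebra k (Fin c → k)}

theorem IsGeneratorCommutator.map_single_of_mem (hd : IsGeneratorCommutator d)
    {s : Finset (Fin c)} {w : Fin c} (hw : w ∈ s) :
    d (Pi.single w (extMonoOf k c s)) = 0 := by
  rw [← extMono_indicator, hd _ (fun i => by split_ifs <;> simp),
    extMono_eq_zero_of_two_le (i := w) (by simp [hw]), smul_zero]

theorem IsGeneratorCommutator.map_single_of_notMem (hd : IsGeneratorCommutator d)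
    {s : Finset (Fin c)} {w : Fin c} (hw : w ∉ s) :
    d (Pi.single w (extMonoOf k c s)) = commutatorCoeff k s w • extMonoOf k c (insert w s) := by
  have hupdate :
      Function.update (fun i => if i ∈ s then 1 else 0) w ((if w ∈ s then 1 else 0) + 1) =
        fun i => if i ∈ insert w s then 1 else 0 := by
    ext i
    rcases eq_or_ne i w with rfl | hi <;> simp [*]
  rw [← extMono_indicator, hd _ (fun i => by split_ifs <;> simp), hupdate, extMono_indicator,
    sum_boole, sum_boole, commutatorCoeff]
  simp only [Nat.cast_id, filter_filter]
  congr 4 <;> ext i <;> simp [and_comm]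

theorem IsGeneratorCommutator.range_eq_span (hd : IsGeneratorCommutator d) (h : (-1 : k) ≠ 1) :
    LinearMap.range d =
      Submodule.span k (extMonoOf k c '' ↑({t | Even #t ∧ 0 < #t} : Finset (Finset (Fin c)))) := by
  refine le_antisymm ?_ (Submodule.span_le.2 ?_)
  · rw [LinearMap.range_eq_map, ← (Pi.basis fun _ : Fin c => extMonoBasis k c).span_eq,
      Submodule.map_span, Submodule.span_le]
    rintro _ ⟨_, ⟨⟨w, s⟩, rfl⟩, rfl⟩
    rw [SetLike.mem_coe, Pi.basis_apply, coe_extMonoBasis]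
    by_cases hw : w ∈ s
    · rw [hd.map_single_of_mem hw]
      exact zero_mem _
    by_cases hs : Even #s
    · rw [hd.map_single_of_notMem hw, (commutatorCoeff_eq_zero_iff h hw).2 hs, zero_smul]
      exact zero_mem _
    · rw [hd.map_single_of_notMem hw]
      refine Submodule.smul_mem _ _ (Submodule.subset_span ⟨insert w s, ?_, rfl⟩)
      simp [card_insert_of_notMem hw, Nat.even_add_one, hs]
  · rintro _ ⟨t, ht, rfl⟩
    simp only [coe_filter, mem_univ, true_and, Set.mem_ofPred_eq] at ht
    obtain ⟨w, hw⟩ := card_pos.1 ht.2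
    have hcoeff : commutatorCoeff k (t.erase w) w ≠ 0 := by
      rw [Ne, commutatorCoeff_eq_zero_iff h (notMem_erase w t), card_erase_of_mem hw,
        Nat.even_iff]
      have := Nat.even_iff.1 ht.1
      omega
    refine ⟨(commutatorCoeff k (t.erase w) w)⁻¹ • Pi.single w (extMonoOf k c (t.erase w)), ?_⟩
    rw [map_smul, hd.map_single_of_notMem (notMem_erase w t), insert_erase hw,
      inv_smul_smul₀ hcoeff]

end Commutator

/-- for the exterior algebra `A` on `c` generators over a field of
characteristic `p ≠ 2`, and `d : A^c → A` the `k`-linear map with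
`d(x_c^{u_c}⋯x_1^{u_1} e_w) = ((-1)^{u_{w+1}+⋯+u_c} - (-1)^{u_1+⋯+u_{w-1}}) x_c^{u_c}⋯x_w^{u_w+1}⋯x_1^{u_1}`,
a monomial `x_c^{u_c}⋯x_1^{u_1}` lies in the image of `d` iff `u_1 + ⋯ + u_c` is a positive
even number; consequently `dim_k (Im d) = 2^(c-1) - 1`. -/
theorem stmt_14 (k : Type*) [Field k] (p : ℕ) (hchar : CharP k p) (hp : p ≠ 2)
    (c : ℕ)
    (d : (Fin c → ExteriorAlgebra k (Fin c → k)) →ₗ[k] ExteriorAlgebra k (Fin c → k))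
    (hd : ∀ (u : Fin c → ℕ), (∀ i, u i ≤ 1) → ∀ w : Fin c,
      d (Pi.single w (extMono k c u)) =
        ((-1 : k) ^ (∑ i ∈ Finset.univ.filter (fun i => w < i), u i) -
         (-1 : k) ^ (∑ i ∈ Finset.univ.filter (fun i => i < w), u i)) •
          extMono k c (Function.update u w (u w + 1))) :
    (∀ (u : Fin c → ℕ), (∀ i, u i ≤ 1) →
        (extMono k c u ∈ LinearMap.range d ↔ Even (∑ i, u i) ∧ 0 < ∑ i, u i)) ∧
      Module.finrank k (LinearMap.range d) = 2 ^ (c - 1) - 1 := by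
  have h : (-1 : k) ≠ 1 := Ring.neg_one_ne_one_of_char_ne_two (by rwa [ringChar.eq k p])
  rw [IsGeneratorCommutator.range_eq_span hd h, ← coe_extMonoBasis]
  refine ⟨fun u hu => ?_, ?_⟩
  · rw [extMono_eq_extMonoOf hu, ← coe_extMonoBasis, Module.Basis.self_mem_span_image,
      sum_eq_card_filter_eq_one _ fun i _ => hu i]
    simp
  · rw [Module.Basis.finrank_span_image, card_filter_even_card_pos, Fintype.card_fin]
end
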